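/- arXiv:math/0211409 — 4 statements merged into one kernel-verified Lean document; each statement's English description precedes it below -/
import Mathlib

section
/- Let ξ = (ξ_t)_{t≥0} be a real Lévy process such that E[e^{χ ξ_1}] = 1 for some χ > 0 and ξ_t → −∞ almost surely as t → +∞. Then the all-time supremum S_∞ := sup_{t ≥ 0} ξ_t is finite almost surely, and E[e^{α S_∞}] < ∞ for every α with 0 ≤ α < χ. -/
open MeasureTheory ProbabilityTheory Filter Set

/-- A real Lévy process on `[0, ∞)` (indexed by `ℝ`, only times `≥ 0` matter):
measurable, starts at `0` a.s., has independent and stationary increments,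
and almost surely càdlàg sample paths on `[0, ∞)`. -/
def IsLevyProcess {Ω : Type*} [MeasurableSpace Ω] (P : Measure Ω) (ξ : ℝ → Ω → ℝ) : Prop :=
  (∀ t : ℝ, Measurable (ξ t)) ∧
  Measurable (Function.uncurry ξ) ∧
  (∀ᵐ ω ∂P, ξ 0 ω = 0) ∧
  -- independent increments
  (∀ (n : ℕ) (t : ℕ → ℝ), Monotone t → t 0 = 0 →
    iIndepFun
      (fun i : Fin n => fun ω => ξ (t (i.1 + 1)) ω - ξ (t i.1) ω) P) ∧
  -- stationary increments
  (∀ s t : ℝ, 0 ≤ s → 0 ≤ t →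
    Measure.map (fun ω => ξ (t + s) ω - ξ t ω) P = Measure.map (ξ s) P) ∧
  -- almost surely càdlàg paths on `[0, ∞)`
  (∀ᵐ ω ∂P, ∀ t : ℝ, 0 ≤ t →
    ContinuousWithinAt (fun s => ξ s ω) (Set.Ici t) t ∧
    (0 < t → ∃ l : ℝ, Tendsto (fun s => ξ s ω) (nhdsWithin t (Set.Iio t)) (nhds l)))

/-!
Under Cramér's condition `E[exp (χ ξ₁)] = 1`, stationarity and independence of the increments
give `E[exp (χ ξ_h)] = 1` for every dyadic mesh `h = 2⁻ᵏ`, so along each dyadic grid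
`exp (χ ξ_{jh})` is a martingale. Splitting the event `max_{j ≤ N} ξ_{jh} > x` according to the
first time the walk exceeds `x` gives Lundberg's inequality `P(sup_j ξ_{jh} > x) ≤ exp (-χ x)`,
uniformly in the mesh. By right-continuity of the paths the supremum over `t ≥ 0` is the supremum
over dyadic times, hence `P(S_∞ > x) ≤ exp (-χ x)`: `S_∞` is a.s. finite, and this exponential
tail makes `E[exp (α S_∞)]` finite for `α < χ`.
-/

open scoped ENNReal

theorem ofReal_exp_mul_le_one_add_tsum {α y : ℝ} (hα : 0 ≤ α) :
    ENNReal.ofReal (Real.exp (α * y)) ≤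
      1 + ∑' n : ℕ, ENNReal.ofReal (Real.exp (α * (n + 1))) * {z : ℝ | n < z}.indicator 1 y := by
  rcases le_or_gt y 0 with hy | hy
  · refine le_add_right (ENNReal.ofReal_le_one.2 (Real.exp_le_one_iff.2 ?_))
    exact mul_nonpos_of_nonneg_of_nonpos hα hy
  set n := ⌈y⌉₊ - 1
  have hn : (n : ℝ) + 1 = ⌈y⌉₊ := by rw [Nat.cast_pred (Nat.ceil_pos.2 hy), sub_add_cancel]
  have hny : (n : ℝ) < y := by linarith [Nat.ceil_lt_add_one hy.le]
  calc ENNReal.ofReal (Real.exp (α * y)) ≤ ENNReal.ofReal (Real.exp (α * (n + 1))) :=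
        ENNReal.ofReal_le_ofReal (Real.exp_le_exp.2 (mul_le_mul_of_nonneg_left
          (hn ▸ Nat.le_ceil _) hα))
    _ = ENNReal.ofReal (Real.exp (α * (n + 1))) * {z : ℝ | n < z}.indicator 1 y := by
        rw [indicator_of_mem (show y ∈ {z : ℝ | n < z} from hny), Pi.one_apply, mul_one]
    _ ≤ _ := (ENNReal.le_tsum n).trans le_add_self

namespace MeasureTheory

variable {Ω : Type*} {mΩ : MeasurableSpace Ω} {P : Measure Ω}

theorem measurable_biSup_comap_sum {η : ℕ → Ω → ℝ} {s : Set ℕ} {t : Finset ℕ} (hts : ↑t ⊆ s) :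
    Measurable[⨆ m ∈ s, MeasurableSpace.comap (η m) inferInstance] fun ω => ∑ m ∈ t, η m ω :=
  Finset.measurable_sum _ fun m hm => (comap_measurable (η m)).mono
    (le_iSup₂ (f := fun m (_ : m ∈ s) => MeasurableSpace.comap (η m) inferInstance) m (hts hm))
    le_rfl

theorem measure_iInter_eq_zero_of_le_exp {A : ℕ → Set Ω} {χ : ℝ} (hχ : 0 < χ)
    (hA : ∀ n : ℕ, P (A n) ≤ ENNReal.ofReal (Real.exp (-(χ * n)))) : P (⋂ n, A n) = 0 := by
  have hlim : Tendsto (fun n : ℕ => ENNReal.ofReal (Real.exp (-(χ * n)))) atTop (nhds 0) := by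
    rw [← ENNReal.ofReal_zero]
    exact ENNReal.tendsto_ofReal <| Real.tendsto_exp_atBot.comp <| tendsto_neg_atTop_atBot.comp <|
      tendsto_natCast_atTop_atTop.const_mul_atTop hχ
  exact le_antisymm (ge_of_tendsto' hlim fun n => (measure_mono (iInter_subset _ n)).trans (hA n))
    zero_le

theorem lintegral_exp_mul_lt_top_of_measure_lt_le [IsFiniteMeasure P] {Y : Ω → ℝ} {χ α : ℝ}
    (htail : ∀ n : ℕ, P {ω | n < Y ω} ≤ ENNReal.ofReal (Real.exp (-(χ * n))))
    (hα : 0 ≤ α) (hαχ : α < χ) : ∫⁻ ω, ENNReal.ofReal (Real.exp (α * Y ω)) ∂P < ⊤ := by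
  -- `Y` need not be measurable, so its superlevel sets are replaced by measurable hulls.
  set A : ℕ → Set Ω := fun n => toMeasurable P {ω | n < Y ω}
  have hA : ∀ n, MeasurableSet (A n) := fun n => measurableSet_toMeasurable _ _
  set c : ℕ → ℝ≥0∞ := fun n => ENNReal.ofReal (Real.exp (α * (n + 1))) with hc_def
  have hlayer : ∀ ω,
      ENNReal.ofReal (Real.exp (α * Y ω)) ≤ 1 + ∑' n, c n * (A n).indicator 1 ω := fun ω =>
    (ofReal_exp_mul_le_one_add_tsum hα).trans <| add_le_add_right (ENNReal.tsum_le_tsum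
      fun n : ℕ => mul_le_mul_right (indicator_le_indicator_of_subset
        (subset_toMeasurable P {ω | n < Y ω}) (fun _ => zero_le) ω) _) _
  have hterm : ∀ n : ℕ,
      c n * P (A n) ≤ ENNReal.ofReal (Real.exp α) * ENNReal.ofReal (Real.exp (α - χ)) ^ n := by
    intro n
    calc c n * P (A n) ≤ c n * ENNReal.ofReal (Real.exp (-(χ * n))) := by
          rw [measure_toMeasurable]
          exact mul_le_mul_right (htail n) _
      _ = _ := by
        rw [hc_def, ← ENNReal.ofReal_pow (Real.exp_nonneg _), ← Real.exp_nat_mul,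
          ← ENNReal.ofReal_mul (Real.exp_nonneg _), ← ENNReal.ofReal_mul (Real.exp_nonneg _),
          ← Real.exp_add, ← Real.exp_add]
        ring_nf
  calc ∫⁻ ω, ENNReal.ofReal (Real.exp (α * Y ω)) ∂P
      ≤ ∫⁻ ω, 1 + ∑' n, c n * (A n).indicator 1 ω ∂P := lintegral_mono hlayer
    _ = P univ + ∑' n, c n * P (A n) := by
        rw [lintegral_add_left measurable_const, lintegral_const, one_mul,
          lintegral_tsum fun n => ((measurable_one.indicator (hA n)).const_mul _).aemeasurable]
        simp_rw [lintegral_const_mul _ (measurable_one.indicator (hA _)),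
          lintegral_indicator_one (hA _)]
    _ ≤ P univ + ENNReal.ofReal (Real.exp α) * ∑' n, ENNReal.ofReal (Real.exp (α - χ)) ^ n := by
        rw [← ENNReal.tsum_mul_left]
        exact add_le_add_right (ENNReal.tsum_le_tsum hterm) _
    _ < ⊤ := by
        refine ENNReal.add_lt_top.2 ⟨measure_lt_top _ _, ENNReal.mul_lt_top ENNReal.ofReal_lt_top
          (tsum_geometric_lt_top.2 ?_)⟩
        rw [ENNReal.ofReal_lt_one, Real.exp_lt_one_iff, sub_neg]
        exact hαχ

end MeasureTheory

namespace ProbabilityTheory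

variable {Ω : Type*} {mΩ : MeasurableSpace Ω} {P : Measure Ω}

theorem measure_le_exp_mul_setLIntegral_of_indep {m : MeasurableSpace Ω} (hm : m ≤ mΩ)
    {F : Set Ω} (hF : MeasurableSet[m] F) {X Y : Ω → ℝ} (hY : Measurable[mΩ] Y)
    (hindep : Indep m (MeasurableSpace.comap Y inferInstance) P) {c x : ℝ} (hc : 0 ≤ c)
    (hexp : ∫⁻ ω, ENNReal.ofReal (Real.exp (c * Y ω)) ∂P = 1) (hXF : ∀ ω ∈ F, x < X ω) :
    P F ≤ ENNReal.ofReal (Real.exp (-(c * x))) *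
      ∫⁻ ω in F, ENNReal.ofReal (Real.exp (c * (X ω + Y ω))) ∂P := by
  have hg : Measurable fun y : ℝ => ENNReal.ofReal (Real.exp (c * y)) := by fun_prop
  calc P F = (∫⁻ ω, F.indicator 1 ω ∂P) * ∫⁻ ω, ENNReal.ofReal (Real.exp (c * Y ω)) ∂P := by
        rw [hexp, mul_one, lintegral_indicator_one (hm _ hF)]
    _ = ∫⁻ ω, F.indicator 1 ω * ENNReal.ofReal (Real.exp (c * Y ω)) ∂P :=
        (lintegral_mul_eq_lintegral_mul_lintegral_of_independent_measurableSpace hm hY.comap_le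
          hindep (measurable_const.indicator hF) (hg.comp (comap_measurable Y))).symm
    _ ≤ ∫⁻ ω, F.indicator (fun ω => ENNReal.ofReal (Real.exp (-(c * x))) *
          ENNReal.ofReal (Real.exp (c * (X ω + Y ω)))) ω ∂P := by
        refine lintegral_mono fun ω => ?_
        by_cases hω : ω ∈ F
        · have hle : Real.exp (c * Y ω) ≤ Real.exp (-(c * x)) * Real.exp (c * (X ω + Y ω)) := by
            rw [← Real.exp_add]
            gcongr
            nlinarith [hXF ω hω]
          simpa [hω, ← ENNReal.ofReal_mul (Real.exp_nonneg _)] using ENNReal.ofReal_le_ofReal hle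
        · simp [hω]
    _ = ENNReal.ofReal (Real.exp (-(c * x))) *
          ∫⁻ ω in F, ENNReal.ofReal (Real.exp (c * (X ω + Y ω))) ∂P := by
        rw [lintegral_indicator (hm _ hF), lintegral_const_mul' _ _ ENNReal.ofReal_ne_top]

theorem measure_exists_lt_le_exp_of_indep {𝓕 : Filtration ℕ mΩ} {S : ℕ → Ω → ℝ}
    (hS : Adapted 𝓕 S) (hS0 : S 0 = 0) {c : ℝ} (hc : 0 ≤ c) {N : ℕ}
    (hindep : ∀ j ≤ N, Indep (𝓕 j) (MeasurableSpace.comap (S N - S j) inferInstance) P)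
    (hexp : ∀ j ≤ N, ∫⁻ ω, ENNReal.ofReal (Real.exp (c * (S N ω - S j ω))) ∂P = 1) (x : ℝ) :
    P {ω | ∃ j ≤ N, x < S j ω} ≤ ENNReal.ofReal (Real.exp (-(c * x))) := by
  have hS' : ∀ j, Measurable (S j) := fun j => (hS j).mono (𝓕.le j) le_rfl
  -- `F j` is the event that `S` first exceeds `x` at time `j`.
  set F : ℕ → Set Ω := disjointed fun j => {ω | x < S j ω} with hF_def
  have hF_meas : ∀ j, MeasurableSet[𝓕 j] (F j) := fun j => by
    rw [hF_def, disjointed_eq_inter_compl]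
    exact (measurableSet_lt measurable_const (hS j)).inter <| .iInter fun i => .iInter fun hi =>
      (measurableSet_lt measurable_const ((hS i).mono (𝓕.mono hi.le) le_rfl)).compl
  have hF : ∀ j ≤ N, P (F j) ≤ ENNReal.ofReal (Real.exp (-(c * x))) *
      ∫⁻ ω in F j, ENNReal.ofReal (Real.exp (c * S N ω)) ∂P := fun j hj => by
    simpa using measure_le_exp_mul_setLIntegral_of_indep (𝓕.le j) (hF_meas j)
      ((hS' N).sub (hS' j)) (hindep j hj) hc (hexp j hj) fun ω hω => disjointed_subset _ j hω
  have hunion : {ω | ∃ j ≤ N, x < S j ω} = ⋃ j ∈ Finset.range (N + 1), F j := by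
    rw [hF_def, biUnion_range_succ_disjointed, partialSups_eq_biSup]
    ext
    simp
  have hdisj : Set.PairwiseDisjoint ↑(Finset.range (N + 1)) F :=
    fun i _ j _ hij => disjoint_disjointed _ hij
  calc P {ω | ∃ j ≤ N, x < S j ω} = ∑ j ∈ Finset.range (N + 1), P (F j) := by
        rw [hunion, measure_biUnion_finset hdisj fun j _ => (𝓕.le j) _ (hF_meas j)]
    _ ≤ ∑ j ∈ Finset.range (N + 1), ENNReal.ofReal (Real.exp (-(c * x))) *
          ∫⁻ ω in F j, ENNReal.ofReal (Real.exp (c * S N ω)) ∂P :=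
        Finset.sum_le_sum fun j hj => hF j (Nat.lt_succ_iff.1 (Finset.mem_range.1 hj))
    _ = ENNReal.ofReal (Real.exp (-(c * x))) *
          ∫⁻ ω in ⋃ j ∈ Finset.range (N + 1), F j, ENNReal.ofReal (Real.exp (c * S N ω)) ∂P := by
        rw [← Finset.mul_sum, lintegral_biUnion_finset hdisj fun j _ => (𝓕.le j) _ (hF_meas j)]
    _ ≤ ENNReal.ofReal (Real.exp (-(c * x))) * ∫⁻ ω, ENNReal.ofReal (Real.exp (c * S N ω)) ∂P :=
        mul_le_mul_right (setLIntegral_le_lintegral _ _) _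
    _ = ENNReal.ofReal (Real.exp (-(c * x))) := by
        simpa [hS0] using congrArg (ENNReal.ofReal (Real.exp (-(c * x))) * ·) (hexp 0 N.zero_le)

theorem iIndepFun.lintegral_exp_sum {η : ℕ → Ω → ℝ} (hη : ∀ m, Measurable (η m))
    (hind : iIndepFun η P) (c : ℝ) (s : Finset ℕ) :
    ∫⁻ ω, ENNReal.ofReal (Real.exp (c * ∑ m ∈ s, η m ω)) ∂P
      = ∏ m ∈ s, ∫⁻ ω, ENNReal.ofReal (Real.exp (c * η m ω)) ∂P := by
  have hg : Measurable fun y : ℝ => ENNReal.ofReal (Real.exp (c * y)) := by fun_prop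
  simp_rw [Finset.mul_sum, Real.exp_sum,
    ENNReal.ofReal_prod_of_nonneg fun _ _ => Real.exp_nonneg _]
  exact lintegral_prod_eq_prod_lintegral_of_indepFun s _ (hind.comp _ fun _ => hg)
    fun m => hg.comp (hη m)

theorem iIndepFun.measure_exists_sum_range_lt_le {η : ℕ → Ω → ℝ} (hη : ∀ m, Measurable (η m))
    (hind : iIndepFun η P) {c : ℝ} (hc : 0 ≤ c)
    (hexp : ∀ m, ∫⁻ ω, ENNReal.ofReal (Real.exp (c * η m ω)) ∂P = 1) (x : ℝ) :
    P {ω | ∃ n, x < ∑ m ∈ Finset.range n, η m ω} ≤ ENNReal.ofReal (Real.exp (-(c * x))) := by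
  set S : ℕ → Ω → ℝ := fun n ω => ∑ m ∈ Finset.range n, η m ω
  have hS : ∀ n, Measurable (S n) := fun n => Finset.measurable_sum _ fun m _ => hη m
  set 𝓕 := Filtration.natural S fun n => (hS n).stronglyMeasurable
  have hpast : ∀ j, 𝓕 j ≤ ⨆ m ∈ Set.Iio j, MeasurableSpace.comap (η m) inferInstance :=
    fun j => iSup₂_le fun n hn => (measurable_biSup_comap_sum fun m hm =>
      (Finset.mem_range.1 hm).trans_le hn).comap_le
  have hfuture : ∀ {j N}, j ≤ N → ∀ ω, S N ω - S j ω = ∑ m ∈ Finset.Ico j N, η m ω :=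
    fun hj _ => (Finset.sum_Ico_eq_sub _ hj).symm
  have hfuture_le : ∀ {j N}, j ≤ N → MeasurableSpace.comap (S N - S j) inferInstance
      ≤ ⨆ m ∈ Set.Ici j, MeasurableSpace.comap (η m) inferInstance := fun {j N} hj => by
    rw [show S N - S j = _ from funext (hfuture hj)]
    exact (measurable_biSup_comap_sum fun m hm => (Finset.mem_Ico.1 hm).1).comap_le
  have hindep : ∀ {j N}, j ≤ N → Indep (𝓕 j) (MeasurableSpace.comap (S N - S j) inferInstance) P :=
    fun hj => indep_of_indep_of_le_left (indep_of_indep_of_le_right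
      (indep_iSup_of_disjoint (fun m => (hη m).comap_le) hind.iIndep
        (Set.Iio_disjoint_Ici le_rfl)) (hfuture_le hj)) (hpast _)
  have hbounded : ∀ N, P {ω | ∃ j ≤ N, x < S j ω} ≤ ENNReal.ofReal (Real.exp (-(c * x))) := by
    refine fun N => measure_exists_lt_le_exp_of_indep (𝓕 := 𝓕)
      (Filtration.stronglyAdapted_natural _).adapted (funext fun _ => Finset.sum_range_zero _) hc
      (fun j hj => hindep hj) (fun j hj => ?_) x
    simp_rw [hfuture hj, hind.lintegral_exp_sum hη, Finset.prod_eq_one fun m _ => hexp m]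
  have hunion : {ω | ∃ n, x < S n ω} = ⋃ N, {ω | ∃ j ≤ N, x < S j ω} := by
    ext ω
    simp only [mem_ofPred_eq, mem_iUnion]
    exact ⟨fun ⟨n, hn⟩ => ⟨n, n, le_rfl, hn⟩, fun ⟨_, n, _, hn⟩ => ⟨n, hn⟩⟩
  have hmono : Monotone fun N => {ω | ∃ j ≤ N, x < S j ω} := by
    rintro N N' hN ω ⟨j, hj, hx⟩
    exact ⟨j, hj.trans hN, hx⟩
  rw [hunion, hmono.measure_iUnion]
  exact iSup_le hbounded

end ProbabilityTheory


theorem ContinuousWithinAt.exists_dyadic_lt {f : ℝ → ℝ} {t y : ℝ}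
    (hf : ContinuousWithinAt f (Ici t) t) (ht : 0 ≤ t) (hy : y < f t) :
    ∃ j k : ℕ, y < f (j / 2 ^ k) := by
  obtain ⟨u, hu, hIco⟩ := mem_nhdsGE_iff_exists_Ico_subset.1 (hf.eventually (lt_mem_nhds hy))
  obtain ⟨k, hk⟩ := exists_pow_lt_of_lt_one (sub_pos.2 (mem_Ioi.1 hu)) (one_half_lt_one (α := ℝ))
  have h2k : (0 : ℝ) < 2 ^ k := by positivity
  have hmesh : 1 < (u - t) * 2 ^ k := (div_lt_iff₀ h2k).1 (by rwa [one_div_pow] at hk)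
  refine ⟨⌈t * 2 ^ k⌉₊, k, hIco ⟨(le_div_iff₀ h2k).2 (Nat.le_ceil _), (div_lt_iff₀ h2k).2 ?_⟩⟩
  linarith [Nat.ceil_lt_add_one (by positivity : 0 ≤ t * 2 ^ k)]

namespace IsLevyProcess

variable {Ω : Type*} [MeasurableSpace Ω] {P : Measure Ω} {ξ : ℝ → Ω → ℝ}

theorem iIndepFun_increments (hξ : IsLevyProcess P ξ) {t : ℕ → ℝ} (ht : Monotone t)
    (ht0 : t 0 = 0) : iIndepFun (fun i ω => ξ (t (i + 1)) ω - ξ (t i) ω) P := by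
  obtain ⟨-, -, -, hindep, -⟩ := hξ
  refine iIndepFun_iff_finset.2 fun s => ?_
  exact (hindep (s.sup id + 1) t ht ht0).precomp
    (g := fun i : s => ⟨i, Nat.lt_succ_of_le (s.le_sup (f := id) i.2)⟩)
    fun _ _ hij => Subtype.ext (congrArg Fin.val hij)

theorem lintegral_comp_increment (hξ : IsLevyProcess P ξ) {g : ℝ → ℝ≥0∞} (hg : Measurable g)
    {s t : ℝ} (hs : 0 ≤ s) (ht : 0 ≤ t) :
    ∫⁻ ω, g (ξ (t + s) ω - ξ t ω) ∂P = ∫⁻ ω, g (ξ s ω) ∂P := by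
  obtain ⟨hmeas, -, -, -, hstat, -⟩ := hξ
  rw [← lintegral_map (g := fun ω => ξ (t + s) ω - ξ t ω) hg ((hmeas _).sub (hmeas _)),
    hstat s t hs ht, lintegral_map hg (hmeas s)]

theorem measure_exists_dyadic_lt_le (hξ : IsLevyProcess P ξ) {χ : ℝ} (hχ : 0 ≤ χ)
    (hcramer : ∫⁻ ω, ENNReal.ofReal (Real.exp (χ * ξ 1 ω)) ∂P = 1) (x : ℝ) :
    P {ω | ∃ j k : ℕ, x < ξ (j / 2 ^ k) ω - ξ 0 ω} ≤ ENNReal.ofReal (Real.exp (-(χ * x))) := by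
  have hg : Measurable fun y : ℝ => ENNReal.ofReal (Real.exp (χ * y)) := by fun_prop
  have hlevel : ∀ k : ℕ, P {ω | ∃ j : ℕ, x < ξ (j / 2 ^ k) ω - ξ 0 ω}
      ≤ ENNReal.ofReal (Real.exp (-(χ * x))) := by
    intro k
    set h : ℝ := (2 ^ k)⁻¹ with h_def
    have hh : 0 ≤ h := by positivity
    set η : ℕ → Ω → ℝ := fun m ω => ξ (↑(m + 1) * h) ω - ξ (↑m * h) ω
    have hη : ∀ m, Measurable (η m) := fun m => (hξ.1 _).sub (hξ.1 _)
    have hind : iIndepFun η P := hξ.iIndepFun_increments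
      (fun a b hab => mul_le_mul_of_nonneg_right (Nat.cast_le.2 hab) hh) (by simp)
    have hsum : ∀ n ω, ∑ m ∈ Finset.range n, η m ω = ξ (n / 2 ^ k) ω - ξ 0 ω := fun n ω => by
      rw [Finset.sum_range_sub (fun m => ξ (↑m * h) ω) n]
      simp [h_def, div_eq_mul_inv]
    have hstep : ∀ m, ∫⁻ ω, ENNReal.ofReal (Real.exp (χ * η m ω)) ∂P
        = ∫⁻ ω, ENNReal.ofReal (Real.exp (χ * ξ h ω)) ∂P := fun m => by
      simp only [η, Nat.cast_succ, add_one_mul]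
      exact hξ.lintegral_comp_increment hg hh (by positivity)
    -- `ξ 1 - ξ 0` is the sum of the `2 ^ k` independent increments `η m`, each distributed
    -- as `ξ h`.
    have hmgf : ∫⁻ ω, ENNReal.ofReal (Real.exp (χ * ξ h ω)) ∂P = 1 := by
      refine (ENNReal.pow_right_strictMono (n := 2 ^ k) (by positivity)).injective ?_
      rw [one_pow, ← Finset.card_range (2 ^ k), ← Finset.prod_const, ← hcramer,
        ← Finset.prod_congr rfl fun m _ => hstep m, ← hind.lintegral_exp_sum hη]
      simp_rw [hsum]
      simpa using hξ.lintegral_comp_increment hg zero_le_one le_rfl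
    simpa only [hsum] using
      hind.measure_exists_sum_range_lt_le hη hχ (fun m => (hstep m).trans hmgf) x
  have hmono : Monotone fun k : ℕ => {ω | ∃ j : ℕ, x < ξ (j / 2 ^ k) ω - ξ 0 ω} := by
    refine monotone_nat_of_le_succ fun k ω ⟨j, hj⟩ => ⟨2 * j, ?_⟩
    rwa [Nat.cast_mul, Nat.cast_two, pow_succ, mul_comm (2 : ℝ),
      mul_div_mul_right _ _ two_ne_zero]
  have hunion : {ω | ∃ j k : ℕ, x < ξ (j / 2 ^ k) ω - ξ 0 ω}
      = ⋃ k : ℕ, {ω | ∃ j : ℕ, x < ξ (j / 2 ^ k) ω - ξ 0 ω} := by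
    ext ω
    simp only [mem_ofPred_eq, mem_iUnion]
    exact exists_comm
  rw [hunion, hmono.measure_iUnion]
  exact iSup_le hlevel

end IsLevyProcess

theorem exp_moments_of_supremum_general
    {Ω : Type*} [MeasurableSpace Ω] (P : Measure Ω) [IsProbabilityMeasure P]
    (ξ : ℝ → Ω → ℝ) (hξ : IsLevyProcess P ξ)
    (χ : ℝ) (hχ : 0 < χ)
    (hcramer : ∫⁻ ω, ENNReal.ofReal (Real.exp (χ * ξ 1 ω)) ∂P = 1) :
    (∀ᵐ ω ∂P, BddAbove (Set.range fun t : {t : ℝ // 0 ≤ t} => ξ t.1 ω)) ∧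
    ∀ α : ℝ, 0 ≤ α → α < χ →
      ∫⁻ ω, ENNReal.ofReal
          (Real.exp (α * sSup (Set.range fun t : {t : ℝ // 0 ≤ t} => ξ t.1 ω))) ∂P < ⊤ := by
  set D : ℝ → Set Ω := fun x => {ω | ∃ j k : ℕ, x < ξ (j / 2 ^ k) ω - ξ 0 ω}
  have hD : ∀ x, P (D x) ≤ ENNReal.ofReal (Real.exp (-(χ * x))) :=
    hξ.measure_exists_dyadic_lt_le hχ.le hcramer
  obtain ⟨-, -, hzero, -, -, hcadlag⟩ := hξ
  have hreach : ∀ᵐ ω ∂P, ∀ x t, 0 ≤ t → x < ξ t ω → ω ∈ D x := by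
    filter_upwards [hzero, hcadlag] with ω h0 hω x t ht hx
    obtain ⟨j, k, hjk⟩ := (hω t ht).1.exists_dyadic_lt ht hx
    exact ⟨j, k, by rwa [h0, sub_zero]⟩
  have hescape : ∀ᵐ ω ∂P, ∃ n : ℕ, ω ∉ D n :=
    measure_mono_null (fun ω hω => by simpa using hω)
      (measure_iInter_eq_zero_of_le_exp hχ fun n => hD n)
  refine ⟨?_, fun α hα hαχ => lintegral_exp_mul_lt_top_of_measure_lt_le (fun n => ?_) hα hαχ⟩
  · filter_upwards [hreach, hescape] with ω hω ⟨n, hn⟩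
    exact ⟨n, forall_mem_range.2 fun t => le_of_not_gt fun h => hn (hω n t t.2 h)⟩
  · refine (measure_mono_ae ?_).trans (hD n)
    filter_upwards [hreach] with ω hω hlt
    obtain ⟨_, ⟨t, rfl⟩, ht⟩ := exists_lt_of_lt_csSup ⟨_, mem_range_self ⟨0, le_rfl⟩⟩ hlt
    exact hω n t t.2 ht

/-- If `ξ` is a Lévy process with `E[exp (χ ξ 1)] = 1` for some `χ > 0` and
`ξ t → -∞` a.s., then `S_∞ = sup_{t ≥ 0} ξ t` is finite a.s. and
`E[exp (α S_∞)] < ∞` for every `0 ≤ α < χ`. -/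
theorem exp_moments_of_supremum
    {Ω : Type*} [MeasurableSpace Ω] (P : Measure Ω) [IsProbabilityMeasure P]
    (ξ : ℝ → Ω → ℝ) (hξ : IsLevyProcess P ξ)
    (χ : ℝ) (hχ : 0 < χ)
    (hcramer : ∫⁻ ω, ENNReal.ofReal (Real.exp (χ * ξ 1 ω)) ∂P = 1)
    (hdrift : ∀ᵐ ω ∂P, Tendsto (fun t => ξ t ω) atTop atBot) :
    (∀ᵐ ω ∂P, BddAbove (Set.range fun t : {t : ℝ // 0 ≤ t} => ξ t.1 ω)) ∧
    ∀ α : ℝ, 0 ≤ α → α < χ →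
      ∫⁻ ω, ENNReal.ofReal
          (Real.exp (α * sSup (Set.range fun t : {t : ℝ // 0 ≤ t} => ξ t.1 ω))) ∂P < ⊤ :=
  exp_moments_of_supremum_general P ξ hξ χ hχ hcramer
end

section
/- Let X be a real random variable, let k > 0 and C ≥ 0. If (1/t) ∫_0^t u^k P(X > u) du → C as t → +∞, then t^k P(X > t) → C as t → +∞. -/
/-!
Write `F t = ∫₀ᵗ u ^ k g u du` with `g u = P(X > u)`, an antitone function. Because `g` decreases,
`F (l t) - F t ≤ g t ∫ₜ^{l t} u ^ k du = t ^ k g t · t (l ^ (k + 1) - 1) / (k + 1)` for every `l > 0`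
(for `l < 1` both sides are negative). Dividing by `t (l ^ (k + 1) - 1) / (k + 1)` and letting
`t → ∞`, the Cesàro hypothesis gives `t ^ k g t ≥ ρ l · C + o(1)` for `l > 1` and `≤` for `l < 1`,
where `ρ l = (k + 1) (l - 1) / (l ^ (k + 1) - 1) → 1` as `l → 1`.
-/

open MeasureTheory Filter Set Topology

section Antitone

variable {μ : Measure ℝ} {w g : ℝ → ℝ} {a b : ℝ}

theorem IntervalIntegrable.mul_antitone (hw : IntervalIntegrable w μ a b) (hg : Antitone g) :
    IntervalIntegrable (fun u => w u * g u) μ a b := by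
  rw [intervalIntegrable_iff] at hw ⊢
  refine hw.mul_bdd (c := max |g (max a b)| |g (min a b)|) hg.measurable.aestronglyMeasurable
    (ae_restrict_of_forall_mem measurableSet_uIoc fun u hu => ?_)
  exact abs_le_max_abs_abs (hg hu.2) (hg hu.1.le)

theorem Antitone.integral_mul_le (hg : Antitone g) (hw : IntervalIntegrable w μ a b)
    (hw0 : ∀ u ∈ uIcc a b, 0 ≤ w u) :
    ∫ u in a..b, w u * g u ∂μ ≤ g a * ∫ u in a..b, w u ∂μ := by
  rw [← intervalIntegral.integral_const_mul]
  rcases le_total a b with hab | hba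
  · refine intervalIntegral.integral_mono_on hab (hw.mul_antitone hg) (hw.const_mul _)
      fun u hu => ?_
    rw [mul_comm (g a)]
    exact mul_le_mul_of_nonneg_left (hg hu.1) (hw0 u (Icc_subset_uIcc hu))
  · rw [intervalIntegral.integral_symm b a, intervalIntegral.integral_symm b a, neg_le_neg_iff]
    refine intervalIntegral.integral_mono_on hba (hw.symm.const_mul _) (hw.symm.mul_antitone hg)
      fun u hu => ?_
    rw [mul_comm (g a)]
    exact mul_le_mul_of_nonneg_left (hg hu.2) (hw0 u (Icc_subset_uIcc' hu))

theorem Antitone.mul_sub_integral_rpow_mul_le (hg : Antitone g) {k l t : ℝ} (hk : -1 < k)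
    (hl : 0 < l) (ht : 0 < t) :
    (k + 1) * ((∫ u in 0..l * t, u ^ k * g u) - ∫ u in 0..t, u ^ k * g u) ≤
      (l ^ (k + 1) - 1) * t * (t ^ k * g t) := by
  have hw (a b : ℝ) : IntervalIntegrable (fun u => u ^ k) volume a b :=
    intervalIntegral.intervalIntegrable_rpow' hk
  rw [intervalIntegral.integral_interval_sub_left ((hw 0 _).mul_antitone hg)
    ((hw 0 _).mul_antitone hg)]
  have hw0 : ∀ u ∈ uIcc t (l * t), 0 ≤ u ^ k := fun u hu =>
    Real.rpow_nonneg ((le_min ht.le (by positivity)).trans hu.1) k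
  have hk1 : 0 < k + 1 := by linarith
  calc (k + 1) * ∫ u in t..l * t, u ^ k * g u
      ≤ (k + 1) * (g t * ∫ u in t..l * t, u ^ k) :=
        mul_le_mul_of_nonneg_left (hg.integral_mul_le (hw _ _) hw0) hk1.le
    _ = (l ^ (k + 1) - 1) * t * (t ^ k * g t) := by
        rw [integral_rpow (Or.inl hk), Real.mul_rpow hl.le ht.le, Real.rpow_add_one ht.ne']
        field_simp

end Antitone

theorem tendsto_rpow_sub_one_div_sub_one (p : ℝ) :
    Tendsto (fun x : ℝ => (x ^ p - 1) / (x - 1)) (𝓝[≠] 1) (𝓝 p) := by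
  have hd : HasDerivAt (fun x : ℝ => x ^ p) p 1 := by
    simpa using Real.hasDerivAt_rpow_const (x := 1) (p := p) (Or.inl one_ne_zero)
  refine (hasDerivAt_iff_tendsto_slope.mp hd).congr fun x => ?_
  simp [slope_def_field]

theorem tendsto_sub_comp_mul_div {F : ℝ → ℝ} {C : ℝ}
    (hF : Tendsto (fun t => F t / t) atTop (𝓝 C)) {l : ℝ} (hl : 0 < l) :
    Tendsto (fun t => (F (l * t) - F t) / t) atTop (𝓝 ((l - 1) * C)) := by
  have hFl : Tendsto (fun t => l * (F (l * t) / (l * t))) atTop (𝓝 (l * C)) :=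
    (hF.comp (tendsto_id.const_mul_atTop hl)).const_mul l
  refine (hFl.sub hF).congr' ?_ |>.trans (by rw [sub_one_mul])
  filter_upwards [eventually_ne_atTop 0] with t ht
  field_simp

theorem tendsto_mul_sub_one_div_rpow_sub_one {p : ℝ} (hp : p ≠ 0) :
    Tendsto (fun x : ℝ => p * (x - 1) / (x ^ p - 1)) (𝓝[≠] 1) (𝓝 1) := by
  refine (tendsto_const_nhds.div (tendsto_rpow_sub_one_div_sub_one p) hp).congr (fun x => ?_)
    |>.trans (by rw [div_self hp])
  exact div_div_eq_mul_div _ _ _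

theorem tendsto_of_tendsto_div_of_increment_le {F φ : ℝ → ℝ} {p C : ℝ} (hp : 0 < p)
    (hF : Tendsto (fun t => F t / t) atTop (𝓝 C))
    (hle : ∀ l > 0, ∀ᶠ t in atTop, p * (F (l * t) - F t) ≤ (l ^ p - 1) * t * φ t) :
    Tendsto φ atTop (𝓝 C) := by
  have hR (l : ℝ) (hl : 0 < l) : Tendsto (fun t => p * ((F (l * t) - F t) / t) / (l ^ p - 1))
      atTop (𝓝 (p * (l - 1) / (l ^ p - 1) * C)) := by
    convert ((tendsto_sub_comp_mul_div hF hl).const_mul p).div_const (l ^ p - 1) using 2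
    ring
  have hρ : Tendsto (fun l : ℝ => p * (l - 1) / (l ^ p - 1) * C) (𝓝[≠] 1) (𝓝 C) := by
    simpa using (tendsto_mul_sub_one_div_rpow_sub_one hp.ne').mul_const C
  rw [tendsto_order]
  constructor
  · intro a ha
    obtain ⟨l, hal, hl : 1 < l⟩ :=
      (((hρ.mono_left (nhdsGT_le_nhdsNE 1)).eventually_const_lt ha).and
        self_mem_nhdsWithin).exists
    have hlp : 0 < l ^ p - 1 := sub_pos.2 (Real.one_lt_rpow hl hp)
    filter_upwards [(hR l (by linarith)).eventually_const_lt hal, hle l (by linarith),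
      eventually_gt_atTop 0] with t hat hlet ht
    refine hat.trans_le ?_
    rw [div_le_iff₀ hlp, ← mul_div_assoc, div_le_iff₀ ht]
    linarith
  · intro b hb
    obtain ⟨l, hlb, hl : l ∈ Ioo 0 1⟩ :=
      (((hρ.mono_left (nhdsLT_le_nhdsNE 1)).eventually_lt_const hb).and
        (Ioo_mem_nhdsLT zero_lt_one)).exists
    have hlp : l ^ p - 1 < 0 := sub_neg.2 (Real.rpow_lt_one hl.1.le hl.2 hp)
    filter_upwards [(hR l hl.1).eventually_lt_const hlb, hle l hl.1,
      eventually_gt_atTop 0] with t htb hlet ht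
    refine lt_of_le_of_lt ?_ htb
    rw [le_div_iff_of_neg hlp, ← mul_div_assoc, div_le_iff₀ ht]
    linarith

theorem tail_of_cesaro_limit_general
    {Ω : Type*} [MeasurableSpace Ω] (P : Measure Ω) [IsProbabilityMeasure P]
    (X : Ω → ℝ) (k : ℝ) (hk : 0 < k) (C : ℝ)
    (h : Tendsto (fun t : ℝ =>
        (∫ u in Set.Ioc (0 : ℝ) t, u ^ k * (P {ω | u < X ω}).toReal) / t) atTop (nhds C)) :
    Tendsto (fun t : ℝ => t ^ k * (P {ω | t < X ω}).toReal) atTop (nhds C) := by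
  set g : ℝ → ℝ := fun u => (P {ω | u < X ω}).toReal
  have hg : Antitone g := fun u v huv =>
    ENNReal.toReal_mono (measure_ne_top _ _) (measure_mono fun ω hω => huv.trans_lt hω)
  have hF : Tendsto (fun t => (∫ u in 0..t, u ^ k * g u) / t) atTop (𝓝 C) := by
    refine h.congr' ?_
    filter_upwards [eventually_ge_atTop 0] with t ht
    rw [intervalIntegral.integral_of_le ht]
  refine tendsto_of_tendsto_div_of_increment_le (p := k + 1) (by linarith) hF fun l hl => ?_
  filter_upwards [eventually_gt_atTop 0] with t ht
  exact hg.mul_sub_integral_rpow_mul_le (by linarith) hl ht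

/-- Goldie's Tauberian lemma (lemma 9.3 of Goldie): if
`(1/t) ∫_0^t u ^ k * P (X > u) du → C` as `t → ∞`, then `t ^ k * P (X > t) → C`. -/
theorem tail_of_cesaro_limit
    {Ω : Type*} [MeasurableSpace Ω] (P : Measure Ω) [IsProbabilityMeasure P]
    (X : Ω → ℝ) (k : ℝ) (hk : 0 < k) (C : ℝ) (hC : 0 ≤ C)
    (h : Tendsto (fun t : ℝ =>
        (∫ u in Set.Ioc (0 : ℝ) t, u ^ k * (P {ω | u < X ω}).toReal) / t) atTop (nhds C)) :
    Tendsto (fun t : ℝ => t ^ k * (P {ω | t < X ω}).toReal) atTop (nhds C) :=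
  tail_of_cesaro_limit_general P X k hk C h
end

section
/- Let ξ = (ξ_t)_{t≥0} be a real Lévy process satisfying E[e^{χ ξ_1}] = 1 for some χ > 0 and E[ξ_1] ∈ [−∞, 0), so that A_∞ = ∫_0^∞ e^{ξ_s} ds is finite a.s. Let (T_i)_{i≥1} be i.i.d. standard exponential random variables independent of ξ, set Θ_n = T_1 + … + T_n, S_0 = 0 and S_n = ξ_{Θ_n}. Let (M, A) be a pair of random variables, independent of (ξ, (T_i)_{i≥1}), with M and A independent of each other, M distributed as e^{S_1} and A distributed as A_∞. Define r(t) = e^{χ t} P(A_∞ > e^t), g(t) = e^{χ t} ( P(A > e^t) − P(M·A > e^t) ), and δ_n(t) = e^{χ t} P( e^{S_n} A > e^t ). Then for every n ≥ 1 and every t ∈ ℝ: r(t) = Σ_{k=0}^{n−1} E[ e^{χ S_k} g(t − S_k) ] + δ_n(t). -/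
/-!
Write `S_k = ξ_{Θ_k}` and `F x = P (A > exp (t - x))`. Subordinated to the independent renewal
times `Θ_k`, the Lévy process becomes a random walk: the law of `S_{k+1}` is that of `S_k`
convolved with that of `S_1`, which is the law of `log M`. (Evaluating the process at an
independent random time is handled through right-continuity of the paths, by approximating the
time from above on a countable grid.) As `M` and `A` are independent,
`P (M A > exp (t - x)) = E F (x + log M)`, hence
`E[exp (χ S_k) g (t - S_k)] = exp (χ t) (E F (S_k) - E F (S_{k+1}))`, and the sum telescopes to
`exp (χ t) (F 0 - E F (S_n)) = r t - δ_n t`.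
-/

open MeasureTheory ProbabilityTheory Filter Set

open scoped ENNReal Topology

namespace ProbabilityTheory

variable {Ω α β : Type*} [MeasurableSpace Ω] [MeasurableSpace α] [MeasurableSpace β]
  {P : Measure Ω} [IsFiniteMeasure P]

lemma IndepFun.measure_prodMk_mem {X : Ω → α} {Y : Ω → β} (hXY : IndepFun X Y P)
    (hX : Measurable X) (hY : Measurable Y) {B : Set (α × β)} (hB : MeasurableSet B) :
    P {ω | (X ω, Y ω) ∈ B} = ∫⁻ x, P {ω | (x, Y ω) ∈ B} ∂P.map X := by
  have hmap := (indepFun_iff_map_prod_eq_prod_map_map hX.aemeasurable hY.aemeasurable).mp hXY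
  change P ((fun ω => (X ω, Y ω)) ⁻¹' B) = _
  rw [← Measure.map_apply (hX.prodMk hY) hB, hmap, Measure.prod_apply hB]
  refine lintegral_congr fun x => ?_
  rw [Measure.map_apply hY (measurable_prodMk_left hB)]
  rfl

namespace Kernel

variable {M N : Type*} [AddMonoid M] [AddMonoid N] [MeasurableSpace M] [MeasurableSpace N]
  [MeasurableAdd₂ M] [MeasurableAdd₂ N]

lemma comp_conv {κ : Kernel M N} [IsSFiniteKernel κ] {μ ν : Measure M} [SFinite μ] [SFinite ν]
    (hκ : ∀ᵐ p ∂μ.prod ν, κ (p.1 + p.2) = κ p.1 ∗ κ p.2) :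
    κ ∘ₘ (μ ∗ ν) = (κ ∘ₘ μ) ∗ (κ ∘ₘ ν) := by
  have hprod : (κ ∘ₘ μ).prod (κ ∘ₘ ν) = (κ ∥ₖ κ) ∘ₘ μ.prod ν := by
    rw [Measure.prod_comp_right, Measure.prod_comp_left, Measure.comp_assoc,
      id_parallelComp_comp_parallelComp_id]
  rw [Measure.conv, Measure.conv, hprod, Measure.map_comp _ _ measurable_add,
    ← Measure.deterministic_comp_eq_map measurable_add, Measure.comp_assoc,
    comp_deterministic_eq_comap]
  refine Measure.comp_congr ?_
  filter_upwards [hκ] with p hp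
  rw [comap_apply, map_apply _ measurable_add, parallelComp_apply, hp]
  rfl

end Kernel
end ProbabilityTheory

noncomputable def upperGridPoint (m : ℕ) (x : ℝ) : ℝ := ⌈x * (m + 1)⌉ / (m + 1)

lemma tendsto_upperGridPoint (x : ℝ) :
    Tendsto (fun m => upperGridPoint m x) atTop (𝓝[≥] x) := by
  have hpos : ∀ m : ℕ, (0 : ℝ) < m + 1 := fun m => by positivity
  have hle : ∀ m : ℕ, x ≤ upperGridPoint m x := fun m => by
    rw [upperGridPoint, le_div_iff₀ (hpos m)]
    exact Int.le_ceil _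
  have hge : ∀ m : ℕ, upperGridPoint m x ≤ x + 1 / (m + 1) := fun m => by
    rw [upperGridPoint, div_le_iff₀ (hpos m), add_mul, one_div_mul_cancel (hpos m).ne']
    exact (Int.ceil_lt_add_one _).le
  refine tendsto_nhdsWithin_iff.mpr ⟨?_, Eventually.of_forall hle⟩
  refine tendsto_of_tendsto_of_tendsto_of_le_of_le tendsto_const_nhds ?_ hle hge
  simpa using tendsto_const_nhds.add (tendsto_one_div_add_atTop_nhds_zero_nat (𝕜 := ℝ))

/-- A jointly measurable substitute for the evaluation `(θ, f) ↦ f θ`, which is not measurable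
for the product σ-algebra on `ℝ → ℝ`; it agrees with the evaluation wherever `f` is
right-continuous. -/
noncomputable def evalFromRight (p : ℝ × (ℝ → ℝ)) : ℝ :=
  limsup (fun m => p.2 (upperGridPoint m p.1)) atTop

lemma measurable_evalFromRight : Measurable evalFromRight := by
  refine Measurable.limsup fun m => ?_
  have hgrid : Measurable fun q : (ℝ → ℝ) × ℤ => q.1 (q.2 / (m + 1)) :=
    measurable_from_prod_countable_left fun k => measurable_pi_apply ((k : ℝ) / (m + 1))
  exact hgrid.comp (measurable_snd.prodMk (Int.measurable_ceil.comp (measurable_fst.mul_const _)))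

lemma evalFromRight_eq_of_continuousWithinAt {f : ℝ → ℝ} {θ : ℝ}
    (hf : ContinuousWithinAt f (Ici θ) θ) : evalFromRight (θ, f) = f θ :=
  (hf.tendsto.comp (tendsto_upperGridPoint θ)).limsup_eq

namespace ProbabilityTheory

variable {Ω ι E : Type*} [MeasurableSpace Ω] [MeasurableSpace ι] [MeasurableSpace E]
  {P : Measure Ω}

noncomputable def marginalKernel (P : Measure Ω) (X : ι → Ω → E) : Kernel ι E :=
  (Kernel.id ×ₖ Kernel.const ι P).map (Function.uncurry X)

instance [SFinite P] {X : ι → Ω → E} : IsSFiniteKernel (marginalKernel P X) := by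
  unfold marginalKernel; infer_instance

lemma marginalKernel_apply [SFinite P] {X : ι → Ω → E} (hX : Measurable (Function.uncurry X))
    (i : ι) : marginalKernel P X i = P.map (X i) := by
  rw [marginalKernel, Kernel.map_apply _ hX, Kernel.prod_apply, Kernel.id_apply,
    Kernel.const_apply, Measure.dirac_prod, Measure.map_map hX measurable_prodMk_left]
  rfl

variable {X : ℝ → Ω → ℝ} {W : Ω → ℝ}

lemma ae_evalFromRight_eq
    (hX : ∀ᵐ ω ∂P, ∀ t, 0 ≤ t → ContinuousWithinAt (X · ω) (Ici t) t)
    (hW : ∀ᵐ ω ∂P, 0 ≤ W ω) :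
    ∀ᵐ ω ∂P, evalFromRight (W ω, fun t => X t ω) = X (W ω) ω := by
  filter_upwards [hX, hW] with ω hω hWω
  exact evalFromRight_eq_of_continuousWithinAt (hω _ hWω)

lemma IndepFun.eval_randomTime {β : Type*} [MeasurableSpace β] {Y : Ω → β}
    (hX : ∀ᵐ ω ∂P, ∀ t, 0 ≤ t → ContinuousWithinAt (X · ω) (Ici t) t)
    (hW : ∀ᵐ ω ∂P, 0 ≤ W ω) (hind : IndepFun Y (fun ω => (W ω, fun t => X t ω)) P) :
    IndepFun Y (fun ω => X (W ω) ω) P :=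
  (hind.comp measurable_id measurable_evalFromRight).congr EventuallyEq.rfl
    (ae_evalFromRight_eq hX hW)

lemma map_eval_randomTime [IsProbabilityMeasure P] (hXm : Measurable (Function.uncurry X))
    (hX : ∀ᵐ ω ∂P, ∀ t, 0 ≤ t → ContinuousWithinAt (X · ω) (Ici t) t)
    (hWm : Measurable W) (hW : ∀ᵐ ω ∂P, 0 ≤ W ω)
    (hind : IndepFun W (fun ω t => X t ω) P) :
    P.map (fun ω => X (W ω) ω) = marginalKernel P X ∘ₘ P.map W := by
  have hpath : Measurable fun ω t => X t ω := measurable_pi_lambda _ fun t => hXm.of_uncurry_left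
  have hθ : ∀ᵐ θ ∂P.map W, 0 ≤ θ := (ae_map_iff hWm.aemeasurable measurableSet_Ici).mpr hW
  ext E hE
  have hpre := measurable_evalFromRight hE
  have hXW : Measurable fun ω => X (W ω) ω := hXm.comp (hWm.prodMk measurable_id)
  rw [Measure.map_apply hXW hE, Measure.bind_apply hE (Kernel.aemeasurable _)]
  calc P ((fun ω => X (W ω) ω) ⁻¹' E)
      = P {ω | (W ω, fun t => X t ω) ∈ evalFromRight ⁻¹' E} := by
        refine measure_congr ?_
        filter_upwards [ae_evalFromRight_eq hX hW] with ω hω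
        change (X (W ω) ω ∈ E) = (evalFromRight (W ω, fun t => X t ω) ∈ E)
        rw [hω]
    _ = ∫⁻ θ, P {ω | (θ, fun t => X t ω) ∈ evalFromRight ⁻¹' E} ∂P.map W :=
        hind.measure_prodMk_mem hWm hpath hpre
    _ = ∫⁻ θ, marginalKernel P X θ E ∂P.map W := by
        refine lintegral_congr_ae ?_
        filter_upwards [hθ] with θ hθ
        rw [marginalKernel_apply hXm, Measure.map_apply hXm.of_uncurry_left hE]
        refine measure_congr ?_
        filter_upwards [hX] with ω hω
        change (evalFromRight (θ, fun t => X t ω) ∈ E) = (X θ ω ∈ E)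
        rw [evalFromRight_eq_of_continuousWithinAt (hω θ hθ)]

end ProbabilityTheory

lemma ae_nonneg_sum_range {Ω : Type*} [MeasurableSpace Ω] {P : Measure Ω} {T : ℕ → Ω → ℝ}
    (hT0 : ∀ i, ∀ᵐ ω ∂P, 0 ≤ T i ω) (k : ℕ) : ∀ᵐ ω ∂P, 0 ≤ ∑ i ∈ Finset.range k, T i ω := by
  filter_upwards [ae_all_iff.mpr hT0] with ω hω using Finset.sum_nonneg fun i _ => hω i

namespace IsLevyProcess

variable {Ω : Type*} [MeasurableSpace Ω] {P : Measure Ω} {ξ : ℝ → Ω → ℝ}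

lemma ae_eq_zero (hξ : IsLevyProcess P ξ) : ∀ᵐ ω ∂P, ξ 0 ω = 0 := hξ.2.2.1

lemma measurable_uncurry (hξ : IsLevyProcess P ξ) : Measurable (Function.uncurry ξ) := hξ.2.1

lemma ae_continuousWithinAt_Ici (hξ : IsLevyProcess P ξ) :
    ∀ᵐ ω ∂P, ∀ t, 0 ≤ t → ContinuousWithinAt (ξ · ω) (Ici t) t := by
  filter_upwards [hξ.2.2.2.2.2] with ω hω t ht using (hω t ht).1

lemma indepFun_increment (hξ : IsLevyProcess P ξ) {s u : ℝ} (hs : 0 ≤ s) (hu : 0 ≤ u) :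
    IndepFun (ξ s) (ξ (s + u) - ξ s) P := by
  let times : ℕ → ℝ := fun i => if i = 0 then 0 else if i = 1 then s else s + u
  have hmono : Monotone times := by
    refine monotone_nat_of_le_succ fun i => ?_
    rcases i with _ | _ | i
    · simpa [times] using hs
    · simpa [times] using hu
    · simp [times]
  have hindep := (hξ.2.2.2.1 2 times hmono rfl).indepFun (show (0 : Fin 2) ≠ 1 by decide)
  refine hindep.congr ?_ EventuallyEq.rfl
  filter_upwards [hξ.2.2.1] with ω hω
  simp [times, hω]

lemma map_add [IsProbabilityMeasure P] (hξ : IsLevyProcess P ξ) {s u : ℝ} (hs : 0 ≤ s)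
    (hu : 0 ≤ u) : P.map (ξ (s + u)) = P.map (ξ s) ∗ P.map (ξ u) := by
  have hmeas : ∀ t, Measurable (ξ t) := hξ.1
  have hstat : P.map (ξ (s + u) - ξ s) = P.map (ξ u) := hξ.2.2.2.2.1 u s hu hs
  rw [← add_sub_cancel (ξ s) (ξ (s + u)), (hξ.indepFun_increment hs hu).map_add_eq_map_conv_map
    (hmeas s) ((hmeas _).sub (hmeas s)), hstat]

lemma marginalKernel_add [IsProbabilityMeasure P] (hξ : IsLevyProcess P ξ) {s u : ℝ}
    (hs : 0 ≤ s) (hu : 0 ≤ u) :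
    marginalKernel P ξ (s + u) = marginalKernel P ξ s ∗ marginalKernel P ξ u := by
  simp only [marginalKernel_apply hξ.measurable_uncurry, hξ.map_add hs hu]

lemma indepFun_eval_sum_range {β : Type*} [MeasurableSpace β] (hξ : IsLevyProcess P ξ)
    {T : ℕ → Ω → ℝ} (hT0 : ∀ i, ∀ᵐ ω ∂P, 0 ≤ T i ω) {Y : Ω → β}
    (hY : IndepFun Y (fun ω => ((fun t => ξ t ω), fun i => T i ω)) P) (k : ℕ) :
    IndepFun Y (fun ω => ξ (∑ i ∈ Finset.range k, T i ω) ω) P := by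
  have hsum : Measurable fun p : (ℝ → ℝ) × (ℕ → ℝ) => (∑ i ∈ Finset.range k, p.2 i, p.1) :=
    (Finset.measurable_sum _ fun i _ => (measurable_pi_apply i).comp measurable_snd).prodMk
      measurable_fst
  exact (hY.comp measurable_id hsum).eval_randomTime hξ.ae_continuousWithinAt_Ici
    (ae_nonneg_sum_range hT0 k)

lemma map_eval_sum_range_succ [IsProbabilityMeasure P] (hξ : IsLevyProcess P ξ)
    {T : ℕ → Ω → ℝ} (hT : ∀ i, Measurable (T i)) (hTiid : iIndepFun T P)
    (hTlaw : ∀ i, P.map (T i) = P.map (T 0)) (hT0 : ∀ i, ∀ᵐ ω ∂P, 0 ≤ T i ω)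
    (hTξ : IndepFun (fun ω i => T i ω) (fun ω t => ξ t ω) P) (k : ℕ) :
    P.map (fun ω => ξ (∑ i ∈ Finset.range (k + 1), T i ω) ω)
      = P.map (fun ω => ξ (∑ i ∈ Finset.range k, T i ω) ω)
        ∗ P.map (fun ω => ξ (∑ i ∈ Finset.range 1, T i ω) ω) := by
  have hΘm : ∀ j, Measurable fun ω => ∑ i ∈ Finset.range j, T i ω := fun j =>
    Finset.measurable_sum _ fun i _ => hT i
  have hΘ0 := ae_nonneg_sum_range hT0
  have hsubord : ∀ j, P.map (fun ω => ξ (∑ i ∈ Finset.range j, T i ω) ω)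
      = marginalKernel P ξ ∘ₘ P.map (fun ω => ∑ i ∈ Finset.range j, T i ω) := fun j =>
    map_eval_randomTime hξ.measurable_uncurry hξ.ae_continuousWithinAt_Ici (hΘm j) (hΘ0 j)
      (hTξ.comp (Finset.measurable_sum _ fun i _ => measurable_pi_apply i) measurable_id)
  have hrenewal : P.map (fun ω => ∑ i ∈ Finset.range (k + 1), T i ω)
      = P.map (fun ω => ∑ i ∈ Finset.range k, T i ω)
        ∗ P.map (fun ω => ∑ i ∈ Finset.range 1, T i ω) := by
    have hsucc : (fun ω => ∑ i ∈ Finset.range (k + 1), T i ω)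
        = (fun ω => ∑ i ∈ Finset.range k, T i ω) + T k := by
      funext ω; exact Finset.sum_range_succ _ _
    have hind := hTiid.indepFun_sum_range_succ hT k
    rw [Finset.sum_fn] at hind
    rw [hsucc, hind.map_add_eq_map_conv_map (hΘm k) (hT k), hTlaw k]
    simp only [Finset.sum_range_one]
  have hθ : ∀ j, ∀ᵐ θ ∂P.map (fun ω => ∑ i ∈ Finset.range j, T i ω), 0 ≤ θ := fun j =>
    (ae_map_iff (hΘm j).aemeasurable measurableSet_Ici).mpr (hΘ0 j)
  rw [hsubord, hsubord, hsubord, hrenewal, Kernel.comp_conv]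
  filter_upwards [Measure.quasiMeasurePreserving_fst.ae (hθ k),
    Measure.quasiMeasurePreserving_snd.ae (hθ 1)] with p hp₁ hp₂
  exact hξ.marginalKernel_add hp₁ hp₂

end IsLevyProcess

lemma ae_nonneg_expMeasure (r : ℝ) : ∀ᵐ x ∂expMeasure r, 0 ≤ x := by
  have hneg : {x : ℝ | ¬0 ≤ x} = Iio 0 := by ext; simp
  rw [ae_iff, hneg, expMeasure, gammaMeasure, withDensity_apply _ measurableSet_Iio]
  exact lintegral_gammaPDF_of_nonpos le_rfl

section

variable {Ω : Type*} [MeasurableSpace Ω] {P : Measure Ω}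

lemma map_eq_map_of_measure_lt_eq [IsProbabilityMeasure P] {X Y : Ω → ℝ} (hX : Measurable X)
    (hY : Measurable Y) (h : ∀ x, P {ω | x < X ω} = P {ω | x < Y ω}) : P.map X = P.map Y := by
  refine Measure.ext_of_Iic _ _ fun x => ?_
  have hIic : ∀ Z : Ω → ℝ, Z ⁻¹' Iic x = {ω | x < Z ω}ᶜ := fun Z => by ext; simp
  rw [Measure.map_apply hX measurableSet_Iic, Measure.map_apply hY measurableSet_Iic, hIic, hIic,
    prob_compl_eq_one_sub (measurableSet_lt measurable_const hX),
    prob_compl_eq_one_sub (measurableSet_lt measurable_const hY), h]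

lemma ae_pos_of_map_eq_map_exp {M Z : Ω → ℝ} (hM : Measurable M) (hZ : Measurable Z)
    (h : P.map M = P.map fun ω => Real.exp (Z ω)) : ∀ᵐ ω ∂P, 0 < M ω := by
  refine (ae_map_iff hM.aemeasurable measurableSet_Ioi).mp ?_
  rw [h, ae_map_iff hZ.exp.aemeasurable measurableSet_Ioi]
  exact Eventually.of_forall fun ω => Real.exp_pos _

lemma map_log_of_map_eq_map_exp {M Z : Ω → ℝ} (hM : Measurable M) (hZ : Measurable Z)
    (h : P.map M = P.map fun ω => Real.exp (Z ω)) :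
    P.map (fun ω => Real.log (M ω)) = P.map Z := by
  rw [← Function.comp_def, ← Measure.map_map Real.measurable_log hM, h,
    Measure.map_map Real.measurable_log hZ.exp]
  simp only [Function.comp_def, Real.log_exp]

end

section ShiftedTail

variable {Ω : Type*} [MeasurableSpace Ω] {P : Measure Ω}

noncomputable def shiftedTail (P : Measure Ω) (Y : Ω → ℝ) (t x : ℝ) : ℝ≥0∞ :=
  P {ω | Real.exp (t - x) < Y ω}

lemma monotone_shiftedTail (Y : Ω → ℝ) (t : ℝ) : Monotone (shiftedTail P Y t) :=
  fun _ _ hxy => measure_mono fun _ hω =>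
    lt_of_le_of_lt (Real.exp_le_exp.mpr (by linarith)) hω

lemma measurable_shiftedTail (Y : Ω → ℝ) (t : ℝ) : Measurable (shiftedTail P Y t) :=
  (monotone_shiftedTail Y t).measurable

lemma exp_sub_lt_iff {t s a : ℝ} : Real.exp (t - s) < a ↔ Real.exp t < Real.exp s * a := by
  rw [Real.exp_sub, div_lt_iff₀' (Real.exp_pos s)]

lemma measure_exp_lt_exp_mul [IsFiniteMeasure P] {Z Y : Ω → ℝ} (hZ : Measurable Z)
    (hY : Measurable Y) (hZY : IndepFun Z Y P) (t : ℝ) :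
    P {ω | Real.exp t < Real.exp (Z ω) * Y ω} = ∫⁻ ω, shiftedTail P Y t (Z ω) ∂P := by
  have hB : MeasurableSet {p : ℝ × ℝ | Real.exp t < Real.exp p.1 * p.2} :=
    measurableSet_lt measurable_const (by fun_prop)
  refine (hZY.measure_prodMk_mem hZ hY hB).trans ?_
  rw [← lintegral_map (measurable_shiftedTail Y t) hZ]
  simp only [shiftedTail, exp_sub_lt_iff, mem_ofPred_eq]

lemma lintegral_shiftedTail_mul [IsFiniteMeasure P] {M A Z Z' : Ω → ℝ} (hM : Measurable M)
    (hA : Measurable A) (hMA : IndepFun M A P) (hMpos : ∀ᵐ ω ∂P, 0 < M ω) (hZ : Measurable Z)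
    (hZ' : Measurable Z') (hlaw : P.map Z' = P.map Z ∗ P.map (fun ω => Real.log (M ω)))
    (t : ℝ) :
    ∫⁻ ω, shiftedTail P (fun ω => M ω * A ω) t (Z ω) ∂P
      = ∫⁻ ω, shiftedTail P A t (Z' ω) ∂P := by
  have hlogM : Measurable fun ω => Real.log (M ω) := Real.measurable_log.comp hM
  have hmul : ∀ x, shiftedTail P (fun ω => M ω * A ω) t x
      = ∫⁻ y, shiftedTail P A t (x + y) ∂P.map (fun ω => Real.log (M ω)) := fun x => by
    calc shiftedTail P (fun ω => M ω * A ω) t x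
        = P {ω | Real.exp (t - x) < Real.exp (Real.log (M ω)) * A ω} := by
          refine measure_congr ?_
          filter_upwards [hMpos] with ω hω
          change (Real.exp (t - x) < M ω * A ω)
            = (Real.exp (t - x) < Real.exp (Real.log (M ω)) * A ω)
          rw [Real.exp_log hω]
      _ = ∫⁻ ω, shiftedTail P A (t - x) (Real.log (M ω)) ∂P :=
          measure_exp_lt_exp_mul hlogM hA (hMA.comp Real.measurable_log measurable_id) _
      _ = ∫⁻ y, shiftedTail P A t (x + y) ∂P.map (fun ω => Real.log (M ω)) := by
          have hshift : Measurable fun y => shiftedTail P A t (x + y) :=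
            (measurable_shiftedTail A t).comp (measurable_const_add x)
          rw [lintegral_map hshift hlogM]
          simp only [shiftedTail, sub_sub]
  rw [← lintegral_map (measurable_shiftedTail _ t) hZ,
    ← lintegral_map (measurable_shiftedTail A t) hZ', hlaw,
    Measure.lintegral_conv (measurable_shiftedTail A t)]
  simp only [hmul]

lemma integrable_toReal_shiftedTail [IsProbabilityMeasure P] {Z : Ω → ℝ} (hZ : Measurable Z)
    (Y : Ω → ℝ) (t : ℝ) : Integrable (fun ω => (shiftedTail P Y t (Z ω)).toReal) P :=
  Integrable.of_bound ((measurable_shiftedTail Y t).comp hZ).ennreal_toReal.aestronglyMeasurable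
    1 (Eventually.of_forall fun _ => by
      rw [Real.norm_of_nonneg ENNReal.toReal_nonneg]; exact measureReal_le_one)

lemma integral_toReal_shiftedTail [IsFiniteMeasure P] {Z : Ω → ℝ} (hZ : Measurable Z)
    (Y : Ω → ℝ) (t : ℝ) : ∫ ω, (shiftedTail P Y t (Z ω)).toReal ∂P
      = (∫⁻ ω, shiftedTail P Y t (Z ω) ∂P).toReal :=
  integral_toReal ((measurable_shiftedTail Y t).comp hZ).aemeasurable
    (Eventually.of_forall fun _ => measure_lt_top _ _)

lemma integral_exp_mul_exp_mul_sub_shiftedTail [IsProbabilityMeasure P] {Z : Ω → ℝ}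
    (hZ : Measurable Z) (Y₁ Y₂ : Ω → ℝ) (χ t : ℝ) :
    ∫ ω, Real.exp (χ * Z ω) * (Real.exp (χ * (t - Z ω)) *
        ((P {ω' | Real.exp (t - Z ω) < Y₁ ω'}).toReal
          - (P {ω' | Real.exp (t - Z ω) < Y₂ ω'}).toReal)) ∂P
      = Real.exp (χ * t) * (∫ ω, (shiftedTail P Y₁ t (Z ω)).toReal ∂P
          - ∫ ω, (shiftedTail P Y₂ t (Z ω)).toReal ∂P) := by
  have hexp : ∀ z, Real.exp (χ * z) * Real.exp (χ * (t - z)) = Real.exp (χ * t) := fun z => by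
    rw [← Real.exp_add]; ring_nf
  simp_rw [← mul_assoc, hexp]
  rw [integral_const_mul]
  exact congrArg _ (integral_sub (integrable_toReal_shiftedTail hZ Y₁ t)
    (integrable_toReal_shiftedTail hZ Y₂ t))

end ShiftedTail

theorem renewal_decomposition_of_tail_general
    {Ω : Type*} [MeasurableSpace Ω] (P : Measure Ω) [IsProbabilityMeasure P]
    (ξ : ℝ → Ω → ℝ) (hξ : IsLevyProcess P ξ)
    (χ : ℝ)
    -- `T i` are i.i.d. standard exponential variables, independent of `ξ`
    (T : ℕ → Ω → ℝ) (hTmeas : ∀ i, Measurable (T i))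
    (hTiid : iIndepFun T P)
    (hTexp : ∀ i, Measure.map (T i) P = ProbabilityTheory.expMeasure 1)
    (hTindep : IndepFun (fun ω => fun i => T i ω) (fun ω => fun t : ℝ => ξ t ω) P)
    -- `(M, A)` is independent of `(ξ, T)`, with `M` independent of `A`,
    -- `M` distributed as `exp (S 1)` and `A` distributed as `A_∞`
    (M A : Ω → ℝ) (hMmeas : Measurable M) (hAmeas : Measurable A)
    (hMA : IndepFun M A P)
    (hMAind : IndepFun (fun ω => (M ω, A ω))
        (fun ω => ((fun t : ℝ => ξ t ω), (fun i => T i ω))) P)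
    (hMlaw : ∀ x : ℝ, P {ω | x < M ω}
        = P {ω | x < Real.exp (ξ (∑ i ∈ Finset.range 1, T i ω) ω)})
    (hAlaw : ∀ x : ℝ,
        P {ω | ENNReal.ofReal x < ∫⁻ s in Set.Ioi (0 : ℝ), ENNReal.ofReal (Real.exp (ξ s ω))}
        = P {ω | x < A ω}) :
    ∀ n : ℕ, 1 ≤ n → ∀ t : ℝ,
      -- r (t)
      Real.exp (χ * t) *
        (P {ω | ENNReal.ofReal (Real.exp t)
            < ∫⁻ s in Set.Ioi (0 : ℝ), ENNReal.ofReal (Real.exp (ξ s ω))}).toReal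
      = (∑ k ∈ Finset.range n,
          -- E[exp (χ S_k) * g (t - S_k)]
          ∫ ω, Real.exp (χ * ξ (∑ i ∈ Finset.range k, T i ω) ω) *
            (Real.exp (χ * (t - ξ (∑ i ∈ Finset.range k, T i ω) ω)) *
              ((P {ω' | Real.exp (t - ξ (∑ i ∈ Finset.range k, T i ω) ω) < A ω'}).toReal -
               (P {ω' | Real.exp (t - ξ (∑ i ∈ Finset.range k, T i ω) ω)
                  < M ω' * A ω'}).toReal)) ∂P)
        -- + δ_n (t)
        + Real.exp (χ * t) *
            (P {ω | Real.exp t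
                < Real.exp (ξ (∑ i ∈ Finset.range n, T i ω) ω) * A ω}).toReal := by
  intro n _ t
  have hSm : ∀ k, Measurable fun ω => ξ (∑ i ∈ Finset.range k, T i ω) ω := fun k =>
    hξ.measurable_uncurry.comp
      ((Finset.measurable_sum (Finset.range k) fun i _ => hTmeas i).prodMk measurable_id)
  have hT0 : ∀ i, ∀ᵐ ω ∂P, 0 ≤ T i ω := fun i =>
    (ae_map_iff (hTmeas i).aemeasurable measurableSet_Ici).mp (hTexp i ▸ ae_nonneg_expMeasure 1)
  have hMexp : P.map M = P.map fun ω => Real.exp (ξ (∑ i ∈ Finset.range 1, T i ω) ω) :=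
    map_eq_map_of_measure_lt_eq hMmeas (hSm 1).exp hMlaw
  have hMpos := ae_pos_of_map_eq_map_exp hMmeas (hSm 1) hMexp
  have hlogM := map_log_of_map_eq_map_exp hMmeas (hSm 1) hMexp
  have hstep : ∀ k, ∫ ω, (shiftedTail P (fun ω => M ω * A ω) t
        (ξ (∑ i ∈ Finset.range k, T i ω) ω)).toReal ∂P
      = ∫ ω, (shiftedTail P A t (ξ (∑ i ∈ Finset.range (k + 1), T i ω) ω)).toReal ∂P := by
    intro k
    have hwalk := hξ.map_eval_sum_range_succ hTmeas hTiid
      (fun i => (hTexp i).trans (hTexp 0).symm) hT0 hTindep k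
    rw [integral_toReal_shiftedTail (hSm k), integral_toReal_shiftedTail (hSm (k + 1)),
      lintegral_shiftedTail_mul hMmeas hAmeas hMA hMpos (hSm k) (hSm (k + 1)) (hlogM ▸ hwalk)]
  have hδ := measure_exp_lt_exp_mul (hSm n) hAmeas
    (hξ.indepFun_eval_sum_range hT0 (hMAind.comp measurable_snd measurable_id) n).symm t
  have hr : ∫ ω, (shiftedTail P A t (ξ (∑ i ∈ Finset.range 0, T i ω) ω)).toReal ∂P
      = (P {ω | Real.exp t < A ω}).toReal := by
    rw [integral_congr_ae (hξ.ae_eq_zero.mono fun ω hω => by rw [Finset.sum_range_zero, hω]),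
      integral_const, probReal_univ, one_smul, shiftedTail, sub_zero]
  rw [hAlaw, Finset.sum_congr rfl fun k _ => integral_exp_mul_exp_mul_sub_shiftedTail (hSm k) A
    (fun ω => M ω * A ω) χ t]
  simp only [hstep]
  rw [← Finset.mul_sum, Finset.sum_range_sub', hr, hδ, integral_toReal_shiftedTail (hSm n)]
  ring

/-- The renewal decomposition `r (t) = Σ_{k<n} E[exp (χ S_k) g (t - S_k)] + δ_n (t)`
for the tail of the exponential functional, where `S_k = ξ_{Θ_k}` is the Lévy process
sampled along a random walk of independent standard exponential times `Θ_k = T_1 + ⋯ + T_k`,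
`r (t) = exp (χ t) P (A_∞ > exp t)`,
`g (t) = exp (χ t) (P (A > exp t) - P (M A > exp t))` and
`δ_n (t) = exp (χ t) P (exp (S_n) A > exp t)`. -/
theorem renewal_decomposition_of_tail
    {Ω : Type*} [MeasurableSpace Ω] (P : Measure Ω) [IsProbabilityMeasure P]
    (ξ : ℝ → Ω → ℝ) (hξ : IsLevyProcess P ξ)
    (χ : ℝ) (hχ : 0 < χ)
    (hcramer : ∫⁻ ω, ENNReal.ofReal (Real.exp (χ * ξ 1 ω)) ∂P = 1)
    (hplus : ∫⁻ ω, ENNReal.ofReal (max (ξ 1 ω) 0) ∂P < ⊤)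
    (hmean : ∫⁻ ω, ENNReal.ofReal (max (ξ 1 ω) 0) ∂P
        < ∫⁻ ω, ENNReal.ofReal (max (-(ξ 1 ω)) 0) ∂P)
    -- `T i` are i.i.d. standard exponential variables, independent of `ξ`
    (T : ℕ → Ω → ℝ) (hTmeas : ∀ i, Measurable (T i))
    (hTiid : iIndepFun T P)
    (hTexp : ∀ i, Measure.map (T i) P = ProbabilityTheory.expMeasure 1)
    (hTindep : IndepFun (fun ω => fun i => T i ω) (fun ω => fun t : ℝ => ξ t ω) P)
    -- `(M, A)` is independent of `(ξ, T)`, with `M` independent of `A`,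
    -- `M` distributed as `exp (S 1)` and `A` distributed as `A_∞`
    (M A : Ω → ℝ) (hMmeas : Measurable M) (hAmeas : Measurable A)
    (hMA : IndepFun M A P)
    (hMAind : IndepFun (fun ω => (M ω, A ω))
        (fun ω => ((fun t : ℝ => ξ t ω), (fun i => T i ω))) P)
    (hMlaw : ∀ x : ℝ, P {ω | x < M ω}
        = P {ω | x < Real.exp (ξ (∑ i ∈ Finset.range 1, T i ω) ω)})
    (hAlaw : ∀ x : ℝ,
        P {ω | ENNReal.ofReal x < ∫⁻ s in Set.Ioi (0 : ℝ), ENNReal.ofReal (Real.exp (ξ s ω))}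
        = P {ω | x < A ω}) :
    ∀ n : ℕ, 1 ≤ n → ∀ t : ℝ,
      -- r (t)
      Real.exp (χ * t) *
        (P {ω | ENNReal.ofReal (Real.exp t)
            < ∫⁻ s in Set.Ioi (0 : ℝ), ENNReal.ofReal (Real.exp (ξ s ω))}).toReal
      = (∑ k ∈ Finset.range n,
          -- E[exp (χ S_k) * g (t - S_k)]
          ∫ ω, Real.exp (χ * ξ (∑ i ∈ Finset.range k, T i ω) ω) *
            (Real.exp (χ * (t - ξ (∑ i ∈ Finset.range k, T i ω) ω)) *
              ((P {ω' | Real.exp (t - ξ (∑ i ∈ Finset.range k, T i ω) ω) < A ω'}).toReal -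
               (P {ω' | Real.exp (t - ξ (∑ i ∈ Finset.range k, T i ω) ω)
                  < M ω' * A ω'}).toReal)) ∂P)
        -- + δ_n (t)
        + Real.exp (χ * t) *
            (P {ω | Real.exp t
                < Real.exp (ξ (∑ i ∈ Finset.range n, T i ω) ω) * A ω}).toReal :=
  renewal_decomposition_of_tail_general P ξ hξ χ T hTmeas hTiid hTexp hTindep M A hMmeas hAmeas hMA
    hMAind hMlaw hAlaw
end

section
/- Let f ∈ L¹(ℝ) and define its exponential smoothing f̃(t) := ∫_{−∞}^{t} e^{−(t−u)} f(u) du (the convolution of f with the kernel K(t) = e^{−t} 1_{\{t>0\}}). Then f̃ is well defined and continuous on ℝ, and Σ_{n ∈ ℤ} sup_{t ∈ [n, n+1]} |f̃(t)| < ∞ (so that f̃ is directly Riemann integrable). -/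
/-!
Continuity comes from `f̃ t = e^{-t} (C + ∫_0^t e^u f u du)`. For the summability, cut the line
into the unit intervals `(m, m + 1]` and let `a m = ∫_{(m, m+1]} |f|`, a summable sequence on `ℤ`.
For `t ∈ [n, n + 1]` only the intervals with `m ≤ n` meet `(-∞, t]`, and there the kernel is at
most `e^{1 - (n - m)}`, so `|f̃ t| ≤ ∑_m e^{1 - |n - m|} a m`. The right-hand side is the discrete
convolution of two summable nonnegative sequences, hence summable in `n`.
-/

open MeasureTheory Set Real

noncomputable def expSmoothing (f : ℝ → ℝ) (t : ℝ) : ℝ :=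
  ∫ u in Iic t, exp (-(t - u)) * f u

lemma exp_neg_sub_mul (t u x : ℝ) : exp (-(t - u)) * x = exp (-t) * (exp u * x) := by
  rw [← mul_assoc, ← exp_add, neg_sub, sub_eq_neg_add]

lemma integrableOn_Iic_exp_mul {f : ℝ → ℝ} {s : ℝ} (hf : IntegrableOn f (Iic s)) :
    IntegrableOn (fun u => exp u * f u) (Iic s) := by
  refine (hf.norm.const_mul (exp s)).mono' (continuous_exp.aestronglyMeasurable.mul hf.1) ?_
  filter_upwards [self_mem_ae_restrict measurableSet_Iic] with u hu
  rw [norm_mul, norm_of_nonneg (exp_pos u).le]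
  gcongr
  exact hu

lemma integrableOn_Iic_exp_neg_sub_mul {f : ℝ → ℝ} {s : ℝ} (hf : IntegrableOn f (Iic s))
    (t : ℝ) : IntegrableOn (fun u => exp (-(t - u)) * f u) (Iic s) := by
  simp only [exp_neg_sub_mul t]
  exact (integrableOn_Iic_exp_mul hf).const_mul (exp (-t))

lemma expSmoothing_eq {f : ℝ → ℝ} (hf : Integrable f) (t : ℝ) :
    expSmoothing f t =
      exp (-t) * ((∫ u in Iic 0, exp u * f u) + ∫ u in (0 : ℝ)..t, exp u * f u) := by
  rw [← intervalIntegral.integral_Iic_sub_Iic (integrableOn_Iic_exp_mul hf.integrableOn)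
    (integrableOn_Iic_exp_mul hf.integrableOn), add_sub_cancel, ← integral_const_mul]
  simp only [expSmoothing, exp_neg_sub_mul t]

lemma continuous_expSmoothing {f : ℝ → ℝ} (hf : Integrable f) : Continuous (expSmoothing f) := by
  have hprim : Continuous fun t => ∫ u in (0 : ℝ)..t, exp u * f u :=
    intervalIntegral.continuous_primitive (fun a b => intervalIntegrable_iff.2 <|
      (integrableOn_Iic_exp_mul (s := max a b) hf.integrableOn).mono_set Ioc_subset_Iic_self) 0
  rw [funext (expSmoothing_eq hf)]
  exact (continuous_exp.comp continuous_neg).mul (continuous_const.add hprim)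

lemma hasSum_integral_Ioc_intCast {E : Type*} [NormedAddCommGroup E] [NormedSpace ℝ E]
    {g : ℝ → E} (hg : Integrable g) :
    HasSum (fun m : ℤ => ∫ u in Ioc (m : ℝ) (m + 1), g u) (∫ u, g u) := by
  simpa [iUnion_Ioc_intCast] using
    hasSum_integral_iUnion (fun m : ℤ => measurableSet_Ioc) (pairwise_disjoint_Ioc_intCast ℝ)
      hg.integrableOn

lemma summable_exp_one_sub_abs_intCast : Summable fun j : ℤ => exp (1 - |(j : ℝ)|) := by
  have hgeom : Summable fun j : ℕ => exp (1 - |((j : ℤ) : ℝ)|) := by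
    simpa [sub_eq_add_neg, exp_add, ← exp_nat_mul, mul_comm, exp_neg] using
      (summable_geometric_of_lt_one (exp_pos (-1)).le (exp_lt_one_iff.2 neg_one_lt_zero)).mul_left
        (exp 1)
  exact .of_nat_of_neg hgeom (by simpa using hgeom)

lemma summable_tsum_mul_sub_of_nonneg {G : Type*} [AddGroup G] {k a : G → ℝ}
    (hk : Summable k) (ha : Summable a) (hk0 : 0 ≤ k) (ha0 : 0 ≤ a) :
    Summable fun n => ∑' m, k (n - m) * a m := by
  let shear : G × G ≃ G × G :=
    { toFun := fun p => (p.1 - p.2, p.2)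
      invFun := fun p => (p.1 + p.2, p.2)
      left_inv := fun p => by simp
      right_inv := fun p => by simp }
  exact (shear.summable_iff.2 (hk.mul_of_nonneg ha hk0 ha0)).prod

lemma exp_neg_sub_le_exp_one_sub_abs {m n : ℤ} {t u : ℝ} (hu : u ∈ Ioc (m : ℝ) (m + 1))
    (hut : u ≤ t) (ht : t ∈ Icc (n : ℝ) (n + 1)) :
    exp (-(t - u)) ≤ exp (1 - |((n - m : ℤ) : ℝ)|) := by
  have hmn : m ≤ n := Int.lt_add_one_iff.1 <| by exact_mod_cast hu.1.trans_le (hut.trans ht.2)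
  rw [abs_of_nonneg (by exact_mod_cast Int.sub_nonneg.2 hmn)]
  push_cast
  exact exp_le_exp.2 (by linarith [hu.2, ht.1])

lemma abs_expSmoothing_le {f : ℝ → ℝ} (hf : Integrable f) {n : ℤ} {t : ℝ}
    (ht : t ∈ Icc (n : ℝ) (n + 1)) :
    |expSmoothing f t| ≤
      ∑' m : ℤ, exp (1 - |((n - m : ℤ) : ℝ)|) * ∫ u in Ioc (m : ℝ) (m + 1), |f u| := by
  set g := (Iic t).indicator fun u => exp (-(t - u)) * |f u| with g_def
  have hg : Integrable g :=
    (integrableOn_Iic_exp_neg_sub_mul hf.abs.integrableOn t).integrable_indicator measurableSet_Iic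
  have hpiece (m : ℤ) : ∫ u in Ioc (m : ℝ) (m + 1), g u ≤
      exp (1 - |((n - m : ℤ) : ℝ)|) * ∫ u in Ioc (m : ℝ) (m + 1), |f u| := by
    rw [← integral_const_mul]
    refine setIntegral_mono_on hg.integrableOn (hf.abs.integrableOn.const_mul _)
      measurableSet_Ioc fun u hu => ?_
    by_cases hut : u ≤ t
    · rw [g_def, indicator_of_mem (mem_Iic.2 hut)]
      exact mul_le_mul_of_nonneg_right (exp_neg_sub_le_exp_one_sub_abs hu hut ht) (abs_nonneg _)
    · rw [g_def, indicator_of_notMem (notMem_Iic.2 (not_le.1 hut))]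
      positivity
  have hdecay : Summable fun m : ℤ =>
      exp (1 - |((n - m : ℤ) : ℝ)|) * ∫ u in Ioc (m : ℝ) (m + 1), |f u| :=
    ((hasSum_integral_Ioc_intCast hf.abs).summable.mul_left (exp 1)).of_nonneg_of_le
      (fun m => by positivity) fun m => by gcongr; linarith [abs_nonneg ((n - m : ℤ) : ℝ)]
  calc |expSmoothing f t|
      ≤ ∫ u in Iic t, exp (-(t - u)) * |f u| := by
        rw [← Real.norm_eq_abs, expSmoothing]
        refine norm_integral_le_of_norm_le
          (integrableOn_Iic_exp_neg_sub_mul hf.abs.integrableOn t) (ae_of_all _ fun u => ?_)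
        rw [norm_mul, norm_of_nonneg (exp_pos _).le, Real.norm_eq_abs]
    _ = ∑' m : ℤ, ∫ u in Ioc (m : ℝ) (m + 1), g u :=
        (integral_indicator measurableSet_Iic).symm.trans
          (hasSum_integral_Ioc_intCast hg).tsum_eq.symm
    _ ≤ _ := (hasSum_integral_Ioc_intCast hg).summable.tsum_le_tsum hpiece hdecay

/-- If `f ∈ L¹ (ℝ)`, then its exponential smoothing
`f̃ (t) = ∫_{-∞}^t exp (-(t-u)) f (u) du` is well defined and continuous, and
`Σ_{n ∈ ℤ} sup_{t ∈ [n, n+1]} |f̃ (t)| < ∞`, i.e. `f̃` is directly Riemann integrable. -/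
theorem smoothing_directly_riemann_integrable
    (f : ℝ → ℝ) (hf : Integrable f) :
    (∀ t : ℝ, IntegrableOn (fun u => Real.exp (-(t - u)) * f u) (Set.Iic t)) ∧
    Continuous (fun t : ℝ => ∫ u in Set.Iic t, Real.exp (-(t - u)) * f u) ∧
    Summable (fun n : ℤ =>
      ⨆ t : Set.Icc (n : ℝ) (n + 1),
        |∫ u in Set.Iic (t : ℝ), Real.exp (-((t : ℝ) - u)) * f u|) := by
  refine ⟨fun t => integrableOn_Iic_exp_neg_sub_mul hf.integrableOn t,
    continuous_expSmoothing hf, ?_⟩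
  have hmass := (hasSum_integral_Ioc_intCast hf.abs).summable
  have hconv := summable_tsum_mul_sub_of_nonneg summable_exp_one_sub_abs_intCast hmass
    (fun j => (exp_pos _).le) fun m => setIntegral_nonneg measurableSet_Ioc fun u _ => abs_nonneg _
  have (n : ℤ) : Nonempty (Icc (n : ℝ) (n + 1)) := (nonempty_Icc.2 (by linarith)).to_subtype
  exact hconv.of_nonneg_of_le (fun n => iSup_nonneg fun t => abs_nonneg _)
    fun n => ciSup_le fun t => abs_expSmoothing_le hf t.2
end
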